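/- In the lattice ℤ^{1,10} with basis l, E_1, …, E_{10} and the standard hyperbolic form, set α = 6l - 3(E_1+E_2) - 2(E_3+E_4+E_5) - (2E_6+E_7+E_8+E_9+E_{10}) and β₁ = 2l-E_1-E_2-E_3-E_4-E_7-E_8, β₂ = 2l-E_1-E_2-E_4-E_5-E_7-E_9, β₃ = 2l-E_1-E_2-E_3-E_5-E_7-E_{10}, β₄ = 2l-E_1-E_2-E_3-E_4-E_9-E_{10}, β₅ = 2l-E_1-E_2-E_4-E_5-E_8-E_{10}, β₆ = 2l-E_1-E_2-E_3-E_5-E_8-E_9. Then α and each β_i are roots (self-intersection -2), the β_i are pairwise orthogonal, and α is orthogonal to every β_i; hence the reflections r_α, r_{β_1}, …, r_{β_6} pairwise commute. -/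
import Mathlib


/-- The hyperbolic form on `ℤ^{1,m}`, realized on vectors `ℕ → ℤ` supported on
coordinates `0, 1, …, m`: coordinate `0` is the class `l`, and coordinate `i`
(`1 ≤ i ≤ m`) is the class `E_i`.  It satisfies `⟨l,l⟩ = 1`, `⟨E_i,E_j⟩ = -δ_{ij}`,
`⟨l,E_i⟩ = 0`. -/
def hypForm (m : ℕ) (x y : ℕ → ℤ) : ℤ :=
  2 * x 0 * y 0 - ∑ i ∈ Finset.range (m + 1), x i * y i

/-- The class `l` (pullback of a line). -/
def lcl : ℕ → ℤ := Pi.single 0 1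

/-- The exceptional class `E_k`. -/
def Ecl (k : ℕ) : ℕ → ℤ := Pi.single k 1

/-- The reflection `r_α (β) = β + ⟨α,β⟩ α` with respect to `α` in `ℤ^{1,m}`. -/
def reflct (m : ℕ) (α β : ℕ → ℤ) : ℕ → ℤ := β + hypForm m α β • α


lemma hypForm_add_smul (m : ℕ) (a x b : ℕ → ℤ) (c : ℤ) :
    hypForm m a (x + c • b) = hypForm m a x + c * hypForm m a b := by
  unfold hypForm
  simp only [Pi.add_apply, Pi.smul_apply, smul_eq_mul]
  have h : ∀ i ∈ Finset.range (m + 1),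
      a i * (x i + c * b i) = a i * x i + c * (a i * b i) := fun i _ => by ring
  rw [Finset.sum_congr rfl h, Finset.sum_add_distrib, ← Finset.mul_sum]
  ring

lemma reflct_comm (m : ℕ) (a b : ℕ → ℤ) (hab : hypForm m a b = 0)
    (hba : hypForm m b a = 0) :
    reflct m a ∘ reflct m b = reflct m b ∘ reflct m a := by
  funext x
  simp only [Function.comp_apply, reflct, hypForm_add_smul, hab, hba, mul_zero, add_zero]
  exact add_right_comm _ _ _

/-- In `ℤ^{1,10}`, the element
`α = 6l - 3(E₁+E₂) - 2(E₃+E₄+E₅) - (2E₆+E₇+E₈+E₉+E₁₀)` and the six listed elements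
`β₁, …, β₆` are roots, the `β_i` are pairwise orthogonal, `α` is orthogonal to every
`β_i`; hence the reflections `r_α, r_{β₁}, …, r_{β₆}` pairwise commute. -/
theorem E8_seven_roots :
    let α : ℕ → ℤ := (6 : ℤ) • lcl - (3 : ℤ) • (Ecl 1 + Ecl 2)
      - (2 : ℤ) • (Ecl 3 + Ecl 4 + Ecl 5)
      - ((2 : ℤ) • Ecl 6 + Ecl 7 + Ecl 8 + Ecl 9 + Ecl 10)
    let b : Fin 6 → (ℕ → ℤ) :=
      ![(2 : ℤ) • lcl - Ecl 1 - Ecl 2 - Ecl 3 - Ecl 4 - Ecl 7 - Ecl 8,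
        (2 : ℤ) • lcl - Ecl 1 - Ecl 2 - Ecl 4 - Ecl 5 - Ecl 7 - Ecl 9,
        (2 : ℤ) • lcl - Ecl 1 - Ecl 2 - Ecl 3 - Ecl 5 - Ecl 7 - Ecl 10,
        (2 : ℤ) • lcl - Ecl 1 - Ecl 2 - Ecl 3 - Ecl 4 - Ecl 9 - Ecl 10,
        (2 : ℤ) • lcl - Ecl 1 - Ecl 2 - Ecl 4 - Ecl 5 - Ecl 8 - Ecl 10,
        (2 : ℤ) • lcl - Ecl 1 - Ecl 2 - Ecl 3 - Ecl 5 - Ecl 8 - Ecl 9]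
    (hypForm 10 α α = -2) ∧
    (∀ t : Fin 6, hypForm 10 (b t) (b t) = -2) ∧
    (∀ s t : Fin 6, s ≠ t → hypForm 10 (b s) (b t) = 0) ∧
    (∀ t : Fin 6, hypForm 10 α (b t) = 0) ∧
    (∀ s t : Fin 6, reflct 10 (b s) ∘ reflct 10 (b t) = reflct 10 (b t) ∘ reflct 10 (b s)) ∧
    (∀ t : Fin 6, reflct 10 α ∘ reflct 10 (b t) = reflct 10 (b t) ∘ reflct 10 α) := by

  intro α b
  have hmain : (hypForm 10 α α = -2) ∧
      (∀ t : Fin 6, hypForm 10 (b t) (b t) = -2) ∧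
      (∀ s t : Fin 6, s ≠ t → hypForm 10 (b s) (b t) = 0) ∧
      (∀ t : Fin 6, hypForm 10 α (b t) = 0) ∧
      (∀ t : Fin 6, hypForm 10 (b t) α = 0) := by decide
  obtain ⟨h1, h2, h3, h4, h5⟩ := hmain
  refine ⟨h1, h2, h3, h4, ?_, ?_⟩
  · intro s t
    by_cases hst : s = t
    · rw [hst]
    · exact reflct_comm 10 (b s) (b t) (h3 s t hst) (h3 t s (Ne.symm hst))
  · intro t
    exact reflct_comm 10 α (b t) (h4 t) (h5 t)
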